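/- arXiv:1708.01822 — 12 statements merged into one kernel-verified Lean document; each statement's English description precedes it below -/
import Mathlib

section
/- For every real number x ≥ 1 and every nonnegative integer m, the sum ∑_{i=0}^{m} (m+1-i)(3i-m) x^i is nonnegative. -/
/-!
The coefficients `cᵢ = (m + 1 - i)(3i - m)` sum to zero and change sign exactly once, at
`k = ⌈m / 3⌉ = (m + 2) / 3`. Replacing every `xⁱ` by `xᵏ` can therefore only decrease the sum
when `x ≥ 1`, and the result is `(∑ cᵢ) xᵏ = 0`.
-/

open Finset

theorem Finset.sum_mul_le_sum_mul_of_sign_change {ι R : Type*} [LinearOrder ι] [Ring R]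
    [PartialOrder R] [IsOrderedRing R] (s : Finset ι) (c f : ι → R) (k : ι) (hf : Monotone f)
    (hneg : ∀ i ∈ s, i < k → c i ≤ 0) (hpos : ∀ i ∈ s, k ≤ i → 0 ≤ c i) :
    (∑ i ∈ s, c i) * f k ≤ ∑ i ∈ s, c i * f i := by
  rw [sum_mul]
  refine sum_le_sum fun i hi => ?_
  rcases lt_or_ge i k with hik | hki
  · exact mul_le_mul_of_nonpos_left (hf hik.le) (hneg i hi hik)
  · exact mul_le_mul_of_nonneg_left (hf hki) (hpos i hi hki)

theorem sum_range_coeff (m n : ℕ) :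
    ∑ i ∈ range n, ((m : ℝ) + 1 - i) * (3 * i - m) = -(n * (m + 1 - n) * (m + 2 - n)) := by
  induction n with
  | zero => simp
  | succ n ih =>
    rw [sum_range_succ, ih]
    push_cast
    ring

theorem sum_range_succ_coeff_eq_zero (m : ℕ) :
    ∑ i ∈ range (m + 1), ((m : ℝ) + 1 - i) * (3 * i - m) = 0 := by
  rw [sum_range_coeff]
  push_cast
  ring

theorem stmt_0 (x : ℝ) (hx : 1 ≤ x) (m : ℕ) :
    0 ≤ ∑ i ∈ Finset.range (m + 1), ((m : ℝ) + 1 - i) * (3 * i - m) * x ^ i := by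
  have hneg : ∀ i ∈ range (m + 1), i < (m + 2) / 3 → ((m : ℝ) + 1 - i) * (3 * i - m) ≤ 0 := by
    intro i hi hik
    have him : (i : ℝ) ≤ m := by exact_mod_cast Nat.lt_succ_iff.mp (mem_range.mp hi)
    have h3 : (3 * i : ℝ) ≤ m := by exact_mod_cast (by omega : 3 * i ≤ m)
    exact mul_nonpos_of_nonneg_of_nonpos (by linarith) (by linarith)
  have hpos : ∀ i ∈ range (m + 1), (m + 2) / 3 ≤ i → 0 ≤ ((m : ℝ) + 1 - i) * (3 * i - m) := by
    intro i hi hki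
    have him : (i : ℝ) ≤ m := by exact_mod_cast Nat.lt_succ_iff.mp (mem_range.mp hi)
    have h3 : (m : ℝ) ≤ 3 * i := by exact_mod_cast (by omega : m ≤ 3 * i)
    exact mul_nonneg (by linarith) (by linarith)
  calc (0 : ℝ)
      = (∑ i ∈ range (m + 1), ((m : ℝ) + 1 - i) * (3 * i - m)) * x ^ ((m + 2) / 3) := by
        rw [sum_range_succ_coeff_eq_zero, zero_mul]
    _ ≤ _ := sum_mul_le_sum_mul_of_sign_change _ _ _ _ (pow_right_mono₀ hx) hneg hpos
end

section
/- Let k ≥ 2 be an integer and let F(x) = x^k. For all real numbers a, y, b with 0 ≤ a < y < b ≤ 1 such that (F(b)-F(y))/(b-y) - (F(y)-F(a))/(y-a) = F'(b) - F'(y), one has 2(b-y)[F(b) - (b-y)F'(b) + (1/2)(b-y)^2 F''(b) - F(y)] + (y-a)[F(b) - (b-y)F'(y) + (b-y)^2 F''(y) - F(y)] > 0. -/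
private lemma lemA (y b : ℝ) (hy : 0 ≤ y) (hyb : y ≤ b) :
    ∀ m : ℕ, b ^ (m + 1) - y ^ (m + 1) ≤ (m + 1) * b ^ m * (b - y) := by
  intro m
  induction m with
  | zero => simp
  | succ n ih =>
    have hb : 0 ≤ b := le_trans hy hyb
    have hdy : 0 ≤ b - y := sub_nonneg.mpr hyb
    have h1 : y ^ (n + 1) ≤ b ^ (n + 1) := pow_le_pow_left₀ hy hyb (n + 1)
    push_cast
    push_cast at ih
    simp only [pow_succ] at ih h1 ⊢
    nlinarith [mul_le_mul_of_nonneg_left ih hb,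
      mul_le_mul_of_nonneg_right h1 hdy]

private lemma lemC (y b : ℝ) (hy : 0 ≤ y) (hyb : y ≤ b) :
    ∀ m : ℕ, (m + 1) * y ^ m * (b - y) ≤ b ^ (m + 1) - y ^ (m + 1) := by
  intro m
  induction m with
  | zero => simp
  | succ n ih =>
    have hb : 0 ≤ b := le_trans hy hyb
    have hdy : 0 ≤ b - y := sub_nonneg.mpr hyb
    have h2 : y ^ n * y ≤ b * y ^ n := by
      have := mul_le_mul_of_nonneg_right hyb (pow_nonneg hy n)
      linarith [this]
    have hn1 : (0 : ℝ) ≤ ((n : ℝ) + 1) * (b - y) :=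
      mul_nonneg (by positivity) hdy
    push_cast
    push_cast at ih
    simp only [pow_succ] at ih ⊢
    nlinarith [mul_le_mul_of_nonneg_left ih hb,
      mul_le_mul_of_nonneg_left h2 hn1]

private lemma lemB (y b : ℝ) (hy : 0 ≤ y) (hyb : y ≤ b) :
    ∀ m : ℕ, ((m : ℝ) + 2) * b ^ (m + 1) * (b - y)
      - (((m : ℝ) + 2) * ((m : ℝ) + 1) / 2) * b ^ m * (b - y) ^ 2
      ≤ b ^ (m + 2) - y ^ (m + 2) := by
  intro m
  induction m with
  | zero => nlinarith [sq_nonneg (b - y)]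
  | succ n ih =>
    have hb : 0 ≤ b := le_trans hy hyb
    have hdy : 0 ≤ b - y := sub_nonneg.mpr hyb
    have hA := lemA y b hy hyb (n + 1)
    push_cast
    push_cast at ih hA
    simp only [pow_succ] at ih hA ⊢
    nlinarith [mul_le_mul_of_nonneg_left ih hb,
      mul_le_mul_of_nonneg_right hA hdy]

theorem stmt_2 (k : ℕ) (hk : 2 ≤ k) (a y b : ℝ)
    (ha : 0 ≤ a) (hay : a < y) (hyb : y < b) (hb : b ≤ 1)
    (hyp : (b ^ k - y ^ k) / (b - y) - (y ^ k - a ^ k) / (y - a)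
      = k * b ^ (k - 1) - k * y ^ (k - 1)) :
    0 < 2 * (b - y) * (b ^ k - (b - y) * (k * b ^ (k - 1))
          + (1 / 2) * (b - y) ^ 2 * (k * (k - 1) * b ^ (k - 2)) - y ^ k)
        + (y - a) * (b ^ k - (b - y) * (k * y ^ (k - 1))
          + (b - y) ^ 2 * (k * (k - 1) * y ^ (k - 2)) - y ^ k) := by
  obtain ⟨m, rfl⟩ : ∃ m, k = m + 2 := ⟨k - 2, by omega⟩
  have hy : 0 < y := lt_of_le_of_lt ha hay
  have hyb' : y ≤ b := le_of_lt hyb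
  have hy' : 0 ≤ y := le_of_lt hy
  have hdy : 0 < b - y := sub_pos.mpr hyb
  have hya : 0 < y - a := sub_pos.mpr hay
  have e1 : m + 2 - 1 = m + 1 := by omega
  have e2 : m + 2 - 2 = m := by omega
  rw [e1, e2]
  push_cast
  have hB := lemB y b hy' hyb' m
  have hC := lemC y b hy' hyb' (m + 1)
  push_cast at hC
  have hprod : 0 < (((m : ℝ) + 2) * ((m : ℝ) + 1)) * ((b - y) ^ 2 * y ^ m) := by
    positivity
  simp only [pow_succ] at hB hC hprod ⊢
  have hT1 : 0 ≤ b ^ m * b * b - (b - y) * (((m : ℝ) + 2) * (b ^ m * b))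
      + 1 / 2 * (b - y) ^ 2 * (((m : ℝ) + 2) * ((m : ℝ) + 2 - 1) * b ^ m)
      - y ^ m * y * y := by nlinarith [hB]
  have hT2 : 0 < b ^ m * b * b - (b - y) * (((m : ℝ) + 2) * (y ^ m * y))
      + (b - y) ^ 2 * (((m : ℝ) + 2) * ((m : ℝ) + 2 - 1) * y ^ m)
      - y ^ m * y * y := by nlinarith [hC, hprod]
  nlinarith [mul_nonneg (le_of_lt hdy) hT1, mul_pos hya hT2]
end

section
/- Suppose F : [0,1] → ℝ is thrice continuously differentiable with F''(x) > 0 and F'''(x) ≥ 0 for all x ∈ (0,1). Then for all a, y, b in [0,1] with a < y < b, one has 2(b-y)[F(b) - (b-y)F'(b) + (1/2)(b-y)^2 F''(b) - F(y)] + (y-a)[F(b) - (b-y)F'(y) + (b-y)^2 F''(y) - F(y)] > 0. -/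
/-!
Both brackets are controlled by Taylor expansions to second order. Since `F''` is monotone on
`[y, b]` (as `F''' ≥ 0`), expanding `F` around `b` overestimates `F y`, so the first bracket is
nonnegative. In the second bracket `F b - F y - (b - y) F' y ≥ 0` by convexity, and the extra
term `(b - y)² F'' y` is strictly positive.
-/

open Set

section

variable {f f' f'' : ℝ → ℝ} {a b : ℝ}

lemma monotoneOn_Icc_of_hasDerivAt_nonneg (hf : ∀ x ∈ Icc a b, HasDerivAt f (f' x) x)
    (hf' : ∀ x ∈ Ioo a b, 0 ≤ f' x) : MonotoneOn f (Icc a b) := by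
  refine monotoneOn_of_hasDerivWithinAt_nonneg (f' := f') (convex_Icc a b)
    (fun x hx => (hf x hx).continuousAt.continuousWithinAt) (fun x hx => ?_) ?_
  · rw [interior_Icc] at hx ⊢
    exact (hf x (Ioo_subset_Icc_self hx)).hasDerivWithinAt
  · rwa [interior_Icc]

lemma sub_mem_Icc_of_monotoneOn_deriv (hf : ∀ x ∈ Icc a b, HasDerivAt f (f' x) x)
    (hf' : MonotoneOn f' (Icc a b)) (hab : a ≤ b) :
    f b - f a ∈ Icc ((b - a) * f' a) ((b - a) * f' b) := by
  rcases hab.eq_or_lt with rfl | hab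
  · simp
  obtain ⟨c, hc, hslope⟩ := exists_hasDerivAt_eq_slope f f' hab
    (fun x hx => (hf x hx).continuousAt.continuousWithinAt)
    (fun x hx => hf x (Ioo_subset_Icc_self hx))
  have hchord : f b - f a = (b - a) * f' c := by
    rw [hslope]; field_simp [(sub_pos.2 hab).ne']
  have hc' : c ∈ Icc a b := Ioo_subset_Icc_self hc
  rw [hchord]
  exact ⟨mul_le_mul_of_nonneg_left (hf' (left_mem_Icc.2 hab.le) hc' hc.1.le) (sub_pos.2 hab).le,
    mul_le_mul_of_nonneg_left (hf' hc' (right_mem_Icc.2 hab.le) hc.2.le) (sub_pos.2 hab).le⟩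

lemma le_taylor_two_right_of_monotoneOn (hf : ∀ x ∈ Icc a b, HasDerivAt f (f' x) x)
    (hf' : ∀ x ∈ Icc a b, HasDerivAt f' (f'' x) x) (hf'' : MonotoneOn f'' (Icc a b))
    (hab : a ≤ b) :
    f a ≤ f b - (b - a) * f' b + 1 / 2 * (b - a) ^ 2 * f'' b := by
  set g : ℝ → ℝ := fun t => f t + (b - t) * f' b - 1 / 2 * (b - t) ^ 2 * f'' b
  have hg : ∀ t ∈ Icc a b, HasDerivAt g (f' t - f' b + (b - t) * f'' b) t := by
    intro t ht
    have hlin : HasDerivAt (fun s : ℝ => b - s) (-1) t := by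
      simpa using (hasDerivAt_id t).const_sub b
    refine (((hf t ht).fun_add (hlin.mul_const (f' b))).fun_sub
      (((hlin.fun_pow 2).const_mul (1 / 2 : ℝ)).mul_const (f'' b))).congr_deriv ?_
    ring
  -- `f' b ≤ f' t + (b - t) f'' b` is the right-hand chord bound for `f'` on `[t, b]`.
  have hg_nonneg : ∀ t ∈ Ioo a b, 0 ≤ f' t - f' b + (b - t) * f'' b := fun t ht => by
    have hsub : Icc t b ⊆ Icc a b := Icc_subset_Icc_left ht.1.le
    have := (sub_mem_Icc_of_monotoneOn_deriv (fun x hx => hf' x (hsub hx))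
      (hf''.mono hsub) ht.2.le).2
    linarith
  have := monotoneOn_Icc_of_hasDerivAt_nonneg hg hg_nonneg (left_mem_Icc.2 hab)
    (right_mem_Icc.2 hab) hab
  simp only [g, sub_self] at this
  linarith

end

theorem stmt_3_general (F F' F'' F''' : ℝ → ℝ)
    (hF1 : ∀ x ∈ Set.Icc (0 : ℝ) 1, HasDerivAt F (F' x) x)
    (hF2 : ∀ x ∈ Set.Icc (0 : ℝ) 1, HasDerivAt F' (F'' x) x)
    (hF3 : ∀ x ∈ Set.Icc (0 : ℝ) 1, HasDerivAt F'' (F''' x) x)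
    (hpos : ∀ x ∈ Set.Ioo (0 : ℝ) 1, 0 < F'' x)
    (hnn : ∀ x ∈ Set.Ioo (0 : ℝ) 1, 0 ≤ F''' x)
    (a y b : ℝ) (ha : 0 ≤ a) (hay : a < y) (hyb : y < b) (hb : b ≤ 1) :
    0 < 2 * (b - y) * (F b - (b - y) * F' b + (1 / 2) * (b - y) ^ 2 * F'' b - F y)
        + (y - a) * (F b - (b - y) * F' y + (b - y) ^ 2 * F'' y - F y) := by
  have hy : 0 < y := ha.trans_lt hay
  have hIcc : Icc y b ⊆ Icc 0 1 := Icc_subset_Icc hy.le hb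
  have hIoo : Ioo y b ⊆ Ioo 0 1 := Ioo_subset_Ioo hy.le hb
  have hF1' := fun x hx => hF1 x (hIcc hx)
  have hF2' := fun x hx => hF2 x (hIcc hx)
  have hF'_mono : MonotoneOn F' (Icc y b) :=
    monotoneOn_Icc_of_hasDerivAt_nonneg hF2' fun x hx => (hpos x (hIoo hx)).le
  have hF''_mono : MonotoneOn F'' (Icc y b) :=
    monotoneOn_Icc_of_hasDerivAt_nonneg (fun x hx => hF3 x (hIcc hx)) fun x hx => hnn x (hIoo hx)
  have hTaylor := le_taylor_two_right_of_monotoneOn hF1' hF2' hF''_mono hyb.le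
  have hconvex := (sub_mem_Icc_of_monotoneOn_deriv hF1' hF'_mono hyb.le).1
  have hcurv : 0 < (b - y) ^ 2 * F'' y :=
    mul_pos (pow_pos (sub_pos.2 hyb) 2) (hpos y ⟨hy, hyb.trans_le hb⟩)
  have hfirst : 0 ≤ F b - (b - y) * F' b + (1 / 2) * (b - y) ^ 2 * F'' b - F y := by linarith
  have hsecond : 0 < F b - (b - y) * F' y + (b - y) ^ 2 * F'' y - F y := by linarith
  have := mul_nonneg (mul_nonneg zero_le_two (sub_pos.2 hyb).le) hfirst
  have := mul_pos (sub_pos.2 hay) hsecond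
  linarith

theorem stmt_3 (F F' F'' F''' : ℝ → ℝ)
    (hF1 : ∀ x ∈ Set.Icc (0 : ℝ) 1, HasDerivAt F (F' x) x)
    (hF2 : ∀ x ∈ Set.Icc (0 : ℝ) 1, HasDerivAt F' (F'' x) x)
    (hF3 : ∀ x ∈ Set.Icc (0 : ℝ) 1, HasDerivAt F'' (F''' x) x)
    (hcont : ContinuousOn F''' (Set.Icc (0 : ℝ) 1))
    (hpos : ∀ x ∈ Set.Ioo (0 : ℝ) 1, 0 < F'' x)
    (hnn : ∀ x ∈ Set.Ioo (0 : ℝ) 1, 0 ≤ F''' x)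
    (a y b : ℝ) (ha : 0 ≤ a) (hay : a < y) (hyb : y < b) (hb : b ≤ 1) :
    0 < 2 * (b - y) * (F b - (b - y) * F' b + (1 / 2) * (b - y) ^ 2 * F'' b - F y)
        + (y - a) * (F b - (b - y) * F' y + (b - y) ^ 2 * F'' y - F y) :=
  stmt_3_general F F' F'' F''' hF1 hF2 hF3 hpos hnn a y b ha hay hyb hb
end

section
/- Let k ≥ 2 be an integer and let a, b be real numbers with 0 ≤ a < 1 < b. If ∑_{i=1}^{k-1} b^i = ∑_{i=1}^{k-1} a^i + k(1 - a^{k-1}), then 2(1-a)(1 - a^k - k(1-a)a^{k-1} - (k(k-1)/2)(1-a)^2 a^{k-2}) < (b-1)(a^k + k(1-a) + k(k-1)(1-a)^2 - 1). -/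
/-!
Write `k = m + 2`, `t = 1 - a` and `L` for the bracket on the left, i.e. the probability that
`Bin(k, t) ≥ 3`. Summing the geometric series, the hypothesis says `E(b - 1) = E`, where
`E(v) = ∑_{j ≥ 2} C(k, j) v^(j-1)` is increasing in `v` and `t E = L + C(k, 2) t² a^(k-2)`.
So it suffices to show `E(u) < E` for `u = 2 t L / R`, `R` the second factor on the right.
The ratio bound `C(k, j + 2) ≤ C(k, 2) ((k - 2) / 3)^j` gives
`E(v) ≤ C(k, 2) v / (1 - (k - 2) v / 3)`, which reduces the claim to
`2 (k - 2) t L < 3 (a^k + k t - 1)`. When `t` is large this follows from `L ≤ 1`; when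
`(k + 4) t ≤ 3` it follows from `2 L ≤ a^k + k t - 1`, a first-moment inequality for `Bin(k, t)`.
-/

open Finset Polynomial

theorem Nat.choose_add_mul_pow_le (n j i : ℕ) :
    n.choose (j + i) * (j + 1) ^ i ≤ n.choose j * (n - j) ^ i := by
  induction i with
  | zero => simp
  | succ i ih =>
    calc n.choose (j + (i + 1)) * (j + 1) ^ (i + 1)
        ≤ n.choose (j + i + 1) * (j + i + 1) * (j + 1) ^ i := by
          rw [pow_succ, ← add_assoc]
          nlinarith [Nat.zero_le (n.choose (j + i + 1) * (j + 1) ^ i)]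
      _ = n.choose (j + i) * (j + 1) ^ i * (n - (j + i)) := by
          rw [Nat.choose_succ_right_eq]; ring
      _ ≤ n.choose j * (n - j) ^ i * (n - j) := by gcongr; omega
      _ = n.choose j * (n - j) ^ (i + 1) := by ring

lemma sub_one_mul_sum_Icc_pow {R : Type*} [CommRing R] (x : R) (m : ℕ) :
    (x - 1) * ∑ i ∈ Icc 1 (m + 1), x ^ i = x ^ (m + 2) - x := by
  rw [← Ico_add_one_right_eq_Icc, mul_comm, geom_sum_Ico_mul x (by omega), pow_one]
  rfl

/- Each binomial term `C(m + 2, 2 + i) u^(2 + i)` is at most `C(m + 2, 2) u² q^i`, so the tail is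
dominated by a geometric series. -/
lemma one_add_pow_sub_le_of_mul_le (m : ℕ) {u : ℝ} (hu : 0 ≤ u) (hmu : m * u ≤ 3) :
    (3 - m * u) * ((1 + u) ^ (m + 2) - 1 - (m + 2) * u) ≤ 3 * (m + 2).choose 2 * u ^ 2 := by
  set q := m * u / 3 with hq
  have hq0 : 0 ≤ q := by positivity
  have hexpand : (1 + u) ^ (m + 2) - 1 - (m + 2) * u
      = ∑ i ∈ range (m + 1), u ^ (2 + i) * (m + 2).choose (2 + i) := by
    rw [add_comm 1 u, add_pow, show m + 2 + 1 = 2 + (m + 1) by ring, sum_range_add]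
    simp only [one_pow, mul_one, sum_range_succ, range_one, sum_singleton, pow_zero,
      Nat.choose_zero_right, Nat.cast_one, pow_one, Nat.choose_one_right, Nat.cast_add,
      Nat.cast_ofNat]
    ring
  have hterm (i : ℕ) :
      u ^ (2 + i) * ((m + 2).choose (2 + i) : ℝ) ≤ (m + 2).choose 2 * u ^ 2 * q ^ i := by
    have h : ((m + 2).choose (2 + i) : ℝ) * 3 ^ i ≤ (m + 2).choose 2 * m ^ i := by
      exact_mod_cast Nat.choose_add_mul_pow_le (m + 2) 2 i
    calc u ^ (2 + i) * ((m + 2).choose (2 + i) : ℝ)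
        = ((m + 2).choose (2 + i) * 3 ^ i : ℝ) * u ^ (2 + i) / 3 ^ i := by field_simp
      _ ≤ ((m + 2).choose 2 * m ^ i : ℝ) * u ^ (2 + i) / 3 ^ i := by gcongr
      _ = (m + 2).choose 2 * u ^ 2 * q ^ i := by rw [hq, div_pow, mul_pow, pow_add]; ring
  have hgeom : (1 - q) * ∑ i ∈ range (m + 1), q ^ i ≤ 1 := by
    rw [mul_comm, geom_sum_mul_neg]
    linarith [pow_nonneg hq0 (m + 1)]
  calc (3 - m * u) * ((1 + u) ^ (m + 2) - 1 - (m + 2) * u)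
      ≤ (3 - m * u) * ((m + 2).choose 2 * u ^ 2 * ∑ i ∈ range (m + 1), q ^ i) := by
        rw [hexpand, mul_sum, mul_sum, mul_sum]
        exact sum_le_sum fun i _ ↦ mul_le_mul_of_nonneg_left (hterm i) (by linarith)
    _ = 3 * (m + 2).choose 2 * u ^ 2 * ((1 - q) * ∑ i ∈ range (m + 1), q ^ i) := by ring
    _ ≤ 3 * (m + 2).choose 2 * u ^ 2 := mul_le_of_le_one_right (by positivity) hgeom

lemma one_add_pow_lt_of_mul_lt (m : ℕ) {v E : ℝ} (hv : 0 < v) (hE : 0 < E)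
    (h : v * (3 * (m + 2).choose 2 + m * E) < 3 * E) :
    (1 + v) ^ (m + 2) < 1 + (m + 2) * v + v * E := by
  have hC : (0 : ℝ) ≤ (m + 2).choose 2 := by positivity
  have hmv : m * v < 3 := by nlinarith
  have hquad : 3 * (m + 2).choose 2 * v ^ 2 < (3 - m * v) * (v * E) := by nlinarith
  have hmul : (3 - m * v) * ((1 + v) ^ (m + 2) - 1 - (m + 2) * v) < (3 - m * v) * (v * E) :=
    (one_add_pow_sub_le_of_mul_le m hv.le hmv.le).trans_lt hquad
  linarith [lt_of_mul_lt_mul_left hmul (by linarith)]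

lemma sum_Icc_one_add_pow_lt (m : ℕ) {u E : ℝ} (hu : 0 < u)
    (h : (1 + u) ^ (m + 2) < 1 + (m + 2) * u + u * E) :
    ∑ i ∈ Icc 1 (m + 1), (1 + u) ^ i < m + 1 + E := by
  have hgeom := sub_one_mul_sum_Icc_pow (1 + u) m
  rw [add_sub_cancel_left] at hgeom
  refine lt_of_mul_lt_mul_left ?_ hu.le
  rw [hgeom]
  linarith

lemma one_add_lt_of_sum_Icc_pow_eq (m : ℕ) {v E b : ℝ} (hv : 0 < v) (hE : 0 < E) (hb : 0 ≤ b)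
    (h : v * (3 * (m + 2).choose 2 + m * E) < 3 * E)
    (hsum_b : ∑ i ∈ Icc 1 (m + 1), b ^ i = m + 1 + E) : 1 + v < b := by
  have hsum := sum_Icc_one_add_pow_lt m hv (one_add_pow_lt_of_mul_lt m hv hE h)
  by_contra! hbv
  have : ∑ i ∈ Icc 1 (m + 1), b ^ i ≤ ∑ i ∈ Icc 1 (m + 1), (1 + v) ^ i :=
    sum_le_sum fun i _ ↦ pow_le_pow_left₀ hb hbv i
  linarith

namespace bernsteinPolynomial

lemma sum_eval (n : ℕ) (x : ℝ) :
    ∑ ν ∈ range (n + 1), (bernsteinPolynomial ℝ n ν).eval x = 1 := by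
  simpa [eval_finsetSum] using congrArg (eval x) (bernsteinPolynomial.sum ℝ n)

lemma sum_mul_eval (n : ℕ) (x : ℝ) :
    ∑ ν ∈ range (n + 1), ν * (bernsteinPolynomial ℝ n ν).eval x = n * x := by
  simpa [eval_finsetSum] using congrArg (eval x) (bernsteinPolynomial.sum_smul ℝ n)

end bernsteinPolynomial

/-- `P(X ≥ 3)` for `X ~ Bin(m + 2, 1 - a)`. -/
def binomTail (m : ℕ) (a : ℝ) : ℝ :=
  1 - a ^ (m + 2) - (m + 2) * (1 - a) * a ^ (m + 1) - (m + 2).choose 2 * (1 - a) ^ 2 * a ^ m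

def bernoulliGap (m : ℕ) (a : ℝ) : ℝ :=
  a ^ (m + 2) + (m + 2) * (1 - a) - 1

lemma bernoulliGap_pos (m : ℕ) {a : ℝ} (ha0 : 0 ≤ a) (ha1 : a < 1) : 0 < bernoulliGap m a := by
  have hbern : 1 + m * (a - 1) ≤ a ^ m := by
    simpa using one_add_mul_le_pow (a := a - 1) (by linarith) m
  have hm : (0 : ℝ) ≤ m := m.cast_nonneg
  have ht : 0 < 1 - a := by linarith
  rw [bernoulliGap, pow_add]
  nlinarith [mul_le_mul_of_nonneg_left hbern (sq_nonneg a), pow_pos ht 2,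
    mul_nonneg (mul_nonneg hm (sq_nonneg (1 - a))) (by linarith : (0 : ℝ) ≤ 1 + a)]

lemma binomTail_le_one (m : ℕ) {a : ℝ} (ha0 : 0 ≤ a) (ha1 : a ≤ 1) : binomTail m a ≤ 1 := by
  have : 0 ≤ 1 - a := by linarith
  have : 0 ≤ a ^ (m + 2) + (m + 2) * (1 - a) * a ^ (m + 1)
    + (m + 2).choose 2 * (1 - a) ^ 2 * a ^ m := by positivity
  rw [binomTail]
  linarith

/- With `w ν = P(X = ν)` for `X ~ Bin(m + 2, 1 - a)`, so that `∑ w ν = 1` and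
`∑ ν w ν = (m + 2) (1 - a)`, the difference of the two sides is `w 2 + ∑_{ν ≥ 3} (ν - 3) w ν`. -/
lemma two_mul_binomTail_le (m : ℕ) {a : ℝ} (ha0 : 0 ≤ a) (ha1 : a ≤ 1) :
    2 * binomTail m a ≤ bernoulliGap m a := by
  set w : ℕ → ℝ := fun ν ↦ (bernsteinPolynomial ℝ (m + 2) ν).eval (1 - a) with hw
  have hw_nonneg (ν : ℕ) : 0 ≤ w ν := by
    simp only [hw, bernsteinPolynomial, eval_mul, eval_pow, eval_natCast, eval_X, eval_sub,
      eval_one]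
    have : 0 ≤ 1 - a := by linarith
    have : 0 ≤ 1 - (1 - a) := by linarith
    positivity
  have hw0 : w 0 = a ^ (m + 2) := by simp [hw, bernsteinPolynomial]
  have hw1 : w 1 = (m + 2) * (1 - a) * a ^ (m + 1) := by simp [hw, bernsteinPolynomial]
  have hw2 : w 2 = (m + 2).choose 2 * (1 - a) ^ 2 * a ^ m := by simp [hw, bernsteinPolynomial]
  have hsum : ∑ ν ∈ range (m + 3), w ν = 1 := bernsteinPolynomial.sum_eval (m + 2) (1 - a)
  have hmean : ∑ ν ∈ range (m + 3), ν * w ν = (m + 2) * (1 - a) := by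
    simpa using bernsteinPolynomial.sum_mul_eval (m + 2) (1 - a)
  simp only [sum_range_succ' _ (m + 2), sum_range_succ' _ (m + 1), sum_range_succ' _ m]
    at hsum hmean
  push_cast at hmean
  simp only [add_mul, sum_add_distrib, one_mul, zero_mul, zero_add, Nat.reduceAdd, add_zero]
    at hsum hmean
  have htail : 0 ≤ ∑ i ∈ range m, (i : ℝ) * w (i + 1 + 1 + 1) :=
    sum_nonneg fun i _ ↦ mul_nonneg i.cast_nonneg (hw_nonneg _)
  rw [binomTail, bernoulliGap]
  linarith [hw_nonneg 2]

lemma two_mul_mul_binomTail_lt (m : ℕ) {a : ℝ} (ha0 : 0 ≤ a) (ha1 : a < 1) :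
    2 * m * (1 - a) * binomTail m a < 3 * bernoulliGap m a := by
  have hG := bernoulliGap_pos m ha0 ha1
  have hmt : 0 ≤ m * (1 - a) := mul_nonneg m.cast_nonneg (by linarith)
  rcases le_or_gt ((m + 6) * (1 - a)) 3 with hsmall | hlarge
  · have h2L := two_mul_binomTail_le m ha0 ha1.le
    have hmt3 : m * (1 - a) < 3 := by linarith
    nlinarith
  · have hL1 := binomTail_le_one m ha0 ha1.le
    have : 0 ≤ a ^ (m + 2) := pow_nonneg ha0 (m + 2)
    rw [bernoulliGap]
    nlinarith

lemma two_mul_binomTail_mul_lt (m : ℕ) {a E : ℝ} (ha0 : 0 ≤ a) (ha1 : a < 1) (hE : 0 < E)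
    (hLE : binomTail m a ≤ (1 - a) * E) :
    2 * (1 - a) * binomTail m a * (3 * (m + 2).choose 2 + m * E)
      < 3 * E * (bernoulliGap m a + 2 * (m + 2).choose 2 * (1 - a) ^ 2) := by
  have hkey := mul_lt_mul_of_pos_right (two_mul_mul_binomTail_lt m ha0 ha1) hE
  have hCt : (0 : ℝ) ≤ 6 * (m + 2).choose 2 * (1 - a) := by
    have : 0 ≤ 1 - a := by linarith
    positivity
  nlinarith [mul_le_mul_of_nonneg_left hLE hCt]

theorem stmt_4 (k : ℕ) (hk : 2 ≤ k) (a b : ℝ) (ha : 0 ≤ a) (ha1 : a < 1) (hb : 1 < b)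
    (hyp : ∑ i ∈ Finset.Icc 1 (k - 1), b ^ i
      = ∑ i ∈ Finset.Icc 1 (k - 1), a ^ i + k * (1 - a ^ (k - 1))) :
    2 * (1 - a) * (1 - a ^ k - k * (1 - a) * a ^ (k - 1)
        - (k * (k - 1) / 2) * (1 - a) ^ 2 * a ^ (k - 2))
      < (b - 1) * (a ^ k + k * (1 - a) + k * (k - 1) * (1 - a) ^ 2 - 1) := by
  obtain ⟨m, rfl⟩ : ∃ m, k = m + 2 := ⟨k - 2, by omega⟩
  rw [← Nat.cast_choose_two]
  simp only [Nat.add_sub_cancel, show m + 2 - 1 = m + 1 from rfl] at hyp ⊢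
  push_cast at hyp ⊢
  set C : ℝ := ((m + 2).choose 2 : ℝ) with hC
  have hR : a ^ (m + 2) + (m + 2) * (1 - a) + (m + 2) * (m + 2 - 1) * (1 - a) ^ 2 - 1
      = bernoulliGap m a + 2 * C * (1 - a) ^ 2 := by
    rw [bernoulliGap, hC, Nat.cast_choose_two]; push_cast; ring
  rw [hR, ← binomTail]
  set R := bernoulliGap m a + 2 * C * (1 - a) ^ 2
  have hRpos : 0 < R := by have := bernoulliGap_pos m ha ha1; positivity
  rcases le_or_gt (binomTail m a) 0 with hL0 | hLpos
  · nlinarith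
  set E := ∑ i ∈ Icc 1 (m + 1), a ^ i + (m + 2) * (1 - a ^ (m + 1)) - (m + 1)
  have hEL : (1 - a) * E = binomTail m a + C * (1 - a) ^ 2 * a ^ m := by
    rw [binomTail]
    linear_combination (-1 : ℝ) * sub_one_mul_sum_Icc_pow a m
  have hLE : binomTail m a ≤ (1 - a) * E := by
    rw [hEL]; linarith [show 0 ≤ C * (1 - a) ^ 2 * a ^ m by positivity]
  have hEpos : 0 < E := pos_of_mul_pos_right (hLpos.trans_le hLE) (by linarith)
  set u := 2 * (1 - a) * binomTail m a / R
  have hub : 1 + u < b := by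
    refine one_add_lt_of_sum_Icc_pow_eq m (by positivity) hEpos (by linarith) ?_ (by linarith)
    rw [div_mul_eq_mul_div, div_lt_iff₀ hRpos]
    exact two_mul_binomTail_mul_lt m ha ha1 hEpos hLE
  calc 2 * (1 - a) * binomTail m a = u * R := (div_mul_cancel₀ _ hRpos.ne').symm
    _ < (b - 1) * R := by gcongr; linarith
end

section
/- Let k ≥ 2 be an integer. For every real number b > 1, ∑_{i=0}^{k-1} (k-1-i) b^i ≤ k(k-1)/2 + ((k-2)/3) · (∑_{i=1}^{k-1} b^i - (k-1)). -/
/-! With `n = k - 1`, summation by parts against `b - 1` shows that six times the gap between the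
two sides equals `(b - 1) * ∑_{j<n} (n - j) (3j - (n - 1)) b^j`. The coefficients of this sum add
up to zero and change sign only once, from negative to positive, at `m = ⌈(n - 1) / 3⌉`; since
`j ↦ b^j` is increasing, the sum is at least `b^m` times the sum of the coefficients, i.e. `0`. -/

open Finset

theorem Finset.mul_sum_le_sum_mul_of_sign_change {ι R : Type*} [LinearOrder ι] [CommRing R]
    [LinearOrder R] [IsStrictOrderedRing R] {s : Finset ι} {c g : ι → R} {m : ι}
    (hneg : ∀ i ∈ s, i < m → c i ≤ 0) (hpos : ∀ i ∈ s, m ≤ i → 0 ≤ c i) (hg : Monotone g) :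
    g m * ∑ i ∈ s, c i ≤ ∑ i ∈ s, c i * g i := by
  rw [mul_sum]
  refine sum_le_sum fun i hi => ?_
  rw [mul_comm]
  rcases lt_or_ge i m with him | hmi
  · exact mul_le_mul_of_nonpos_left (hg him.le) (hneg i hi him)
  · exact mul_le_mul_of_nonneg_left (hg hmi) (hpos i hi hmi)

theorem sub_one_mul_sum_mul_pow {R : Type*} [CommRing R] (c : ℕ → R) (b : R) (n : ℕ) :
    (b - 1) * ∑ j ∈ range n, c j * b ^ j
      = ∑ j ∈ range n, (c j - c (j + 1)) * b ^ (j + 1) + c n * b ^ n - c 0 := by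
  induction n with
  | zero => simp
  | succ n ih => rw [sum_range_succ, mul_add, ih, sum_range_succ]; ring

theorem sum_range_cast_mul_two (n : ℕ) : (∑ j ∈ range n, (j : ℝ)) * 2 = n * (n - 1) := by
  induction n with
  | zero => simp
  | succ n ih => rw [sum_range_succ, add_mul, ih]; push_cast; ring

noncomputable def gapCoeff (n j : ℕ) : ℝ := ((n : ℝ) - j) * (3 * j - (n - 1))

theorem sum_gapCoeff (n : ℕ) : ∑ j ∈ range n, gapCoeff n j = 0 := by
  induction n with
  | zero => simp
  | succ n ih =>
    have hstep : ∀ j ∈ range n, gapCoeff (n + 1) j = gapCoeff n j + (j : ℝ) * 4 - 2 * n :=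
      fun j _ => by simp only [gapCoeff]; push_cast; ring
    rw [sum_range_succ, sum_congr rfl hstep, sum_sub_distrib, sum_add_distrib, ← sum_mul, ih,
      sum_const, card_range, gapCoeff]
    push_cast
    linear_combination 2 * sum_range_cast_mul_two n

theorem sum_gapCoeff_mul_pow_nonneg (n : ℕ) {b : ℝ} (hb : 1 ≤ b) :
    0 ≤ ∑ j ∈ range n, gapCoeff n j * b ^ j := by
  -- `(n + 1) / 3 = ⌈(n - 1) / 3⌉` in `ℕ`
  have key := mul_sum_le_sum_mul_of_sign_change (s := range n) (c := gapCoeff n)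
    (m := (n + 1) / 3) ?_ ?_ (pow_right_mono₀ hb)
  · rwa [sum_gapCoeff, mul_zero] at key
  all_goals
    intro j hj h
    have hjn : (j : ℝ) < n := by exact_mod_cast mem_range.1 hj
    simp only [gapCoeff]
  · have : 3 * (j : ℝ) + 2 ≤ n := by exact_mod_cast (by omega : 3 * j + 2 ≤ n)
    nlinarith
  · have : (n : ℝ) ≤ 3 * j + 1 := by exact_mod_cast (by omega : n ≤ 3 * j + 1)
    nlinarith

theorem six_mul_sum_add_sub_one_mul_sum_gapCoeff (n : ℕ) (b : ℝ) :
    6 * ∑ i ∈ range (n + 1), ((n : ℝ) - i) * b ^ i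
        + (b - 1) * ∑ j ∈ range n, gapCoeff n j * b ^ j
      = 3 * n * (n + 1) + 2 * (n - 1) * (∑ i ∈ Icc 1 n, b ^ i - n) := by
  have hIcc : ∑ i ∈ Icc 1 n, b ^ i = ∑ j ∈ range n, b ^ (j + 1) := by
    rw [← Ico_add_one_right_eq_Icc, sum_Ico_eq_sum_range]
    simp only [add_tsub_cancel_right, add_comm 1]
  have hterm : ∀ j ∈ range n, 6 * (((n : ℝ) - (j + 1 : ℕ)) * b ^ (j + 1))
      + (gapCoeff n j - gapCoeff n (j + 1)) * b ^ (j + 1) = 2 * ((n : ℝ) - 1) * b ^ (j + 1) :=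
    fun j _ => by simp only [gapCoeff]; push_cast; ring
  have hsum := sum_congr rfl hterm
  rw [sum_add_distrib, ← mul_sum, ← mul_sum] at hsum
  rw [sub_one_mul_sum_mul_pow, sum_range_succ', hIcc]
  have hlast : gapCoeff n n = 0 := by simp [gapCoeff]
  have hfirst : gapCoeff n 0 = -(n * (n - 1)) := by simp [gapCoeff]; ring
  rw [hlast, hfirst]
  linear_combination hsum

theorem stmt_5 (k : ℕ) (hk : 2 ≤ k) (b : ℝ) (hb : 1 < b) :
    ∑ i ∈ Finset.range k, ((k : ℝ) - 1 - i) * b ^ i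
      ≤ k * (k - 1) / 2
        + (((k : ℝ) - 2) / 3) * (∑ i ∈ Finset.Icc 1 (k - 1), b ^ i - ((k : ℝ) - 1)) := by
  obtain ⟨n, rfl⟩ : ∃ n, k = n + 1 := ⟨k - 1, by omega⟩
  have hgap := mul_nonneg (sub_nonneg.2 hb.le) (sum_gapCoeff_mul_pow_nonneg n hb.le)
  have hid := six_mul_sum_add_sub_one_mul_sum_gapCoeff n b
  push_cast
  simp only [add_sub_cancel_right]
  linarith
end

section
/- Let k ≥ 2 be an integer. For every real number a with 0 ≤ a < 1, (2(k-2)/3) · (∑_{i=0}^{k-1} a^i - k a^{k-1}) < ∑_{i=0}^{k-2} (k-1-i) a^i. -/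
/-!
Write `k = j + 2`. Clearing the factor `3`, the inequality says that
`F(a) = ∑_{i ≤ j} (j + 3 - 3i) aⁱ + 2j(j + 1) a^{j+1}` is positive. Summing by parts twice
against the cubic weights `q m = (m + 1)(m + 2)(j + 3 - m)`, whose second difference is twice the
coefficient sequence of `F` shifted by two, gives
`2 F(a) = (1 - a)² ∑_{m < j} q m aᵐ + q j aʲ`, a sum of nonnegative terms for `a ≥ 0`.
-/

open Finset

theorem one_sub_mul_sum_mul_pow {R : Type*} [CommRing R] (f : ℕ → R) (a : R) (n : ℕ) :
    (1 - a) * ∑ m ∈ range n, f m * a ^ m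
      = f 0 - f n * a ^ n + a * ∑ m ∈ range n, (f (m + 1) - f m) * a ^ m := by
  induction n with
  | zero => simp
  | succ n ih => rw [sum_range_succ, sum_range_succ]; linear_combination ih

theorem two_mul_sum_linear_mul_pow_eq {R : Type*} [CommRing R] (a : R) (j : ℕ) :
    2 * (∑ i ∈ range (j + 1), ((j : R) + 3 - 3 * i) * a ^ i + 2 * (j + 1) * j * a ^ (j + 1))
      = (1 - a) ^ 2 * ∑ m ∈ range j, ((m : R) + 1) * (m + 2) * (j + 3 - m) * a ^ m
        + 3 * (j + 1) * (j + 2) * a ^ j := by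
  set q : ℕ → R := fun m => ((m : R) + 1) * (m + 2) * (j + 3 - m)
  set S := ∑ m ∈ range j, ((j : R) + 3 - 3 * ((m : R) + 2)) * a ^ m
  have hq := one_sub_mul_sum_mul_pow q a j
  have hdq := one_sub_mul_sum_mul_pow (fun m => q (m + 1) - q m) a j
  have hd2q :
      ∑ m ∈ range j, (q (m + 1 + 1) - q (m + 1) - (q (m + 1) - q m)) * a ^ m = 2 * S := by
    rw [mul_sum]
    exact sum_congr rfl fun m _ => by simp only [q]; push_cast; ring
  have hshift :
      ∑ i ∈ range (j + 2), ((j : R) + 3 - 3 * i) * a ^ i = j + 3 + j * a + a ^ 2 * S := by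
    have : ∑ m ∈ range j, ((j : R) + 3 - 3 * ↑(m + 1 + 1)) * a ^ (m + 1 + 1) = a ^ 2 * S := by
      rw [mul_sum]
      exact sum_congr rfl fun m _ => by push_cast; ring
    rw [sum_range_succ', sum_range_succ', this]
    push_cast
    ring
  rw [sum_range_succ] at hshift
  rw [hd2q] at hdq
  simp only [q] at hq hdq
  push_cast at hq hdq hshift
  linear_combination -(1 - a) * hq - a * hdq + 2 * hshift

theorem sum_linear_mul_pow_add_pos {R : Type*} [CommRing R] [LinearOrder R] [IsStrictOrderedRing R]
    (j : ℕ) {a : R} (ha : 0 ≤ a) :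
    0 < ∑ i ∈ range (j + 1), ((j : R) + 3 - 3 * i) * a ^ i + 2 * (j + 1) * j * a ^ (j + 1) := by
  rcases ha.eq_or_lt with rfl | ha
  · simpa [sum_range_succ'] using (show (0 : R) < j + 3 by positivity)
  · have hQ : 0 ≤ ∑ m ∈ range j, ((m : R) + 1) * (m + 2) * (j + 3 - m) * a ^ m := by
      refine sum_nonneg fun m hm => ?_
      have : (m : R) < j := by exact_mod_cast mem_range.mp hm
      have : (0 : R) < j + 3 - m := by linarith
      positivity
    have h2 : 0 < 2 * (∑ i ∈ range (j + 1), ((j : R) + 3 - 3 * i) * a ^ i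
        + 2 * (j + 1) * j * a ^ (j + 1)) := by
      rw [two_mul_sum_linear_mul_pow_eq]
      exact add_pos_of_nonneg_of_pos (mul_nonneg (sq_nonneg _) hQ) (by positivity)
    exact pos_of_mul_pos_right h2 zero_le_two

theorem stmt_6_general (k : ℕ) (hk : 2 ≤ k) (a : ℝ) (ha : 0 ≤ a) :
    (2 * ((k : ℝ) - 2) / 3) * (∑ i ∈ Finset.range k, a ^ i - k * a ^ (k - 1))
      < ∑ i ∈ Finset.range (k - 1), ((k : ℝ) - 1 - i) * a ^ i := by
  obtain ⟨j, rfl⟩ : ∃ j, k = j + 2 := ⟨k - 2, by omega⟩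
  have hsplit : ∑ i ∈ range (j + 1), ((j : ℝ) + 3 - 3 * i) * a ^ i
      = 3 * ∑ i ∈ range (j + 1), ((j : ℝ) + 2 - 1 - i) * a ^ i
        - 2 * j * ∑ i ∈ range (j + 1), a ^ i := by
    rw [mul_sum, mul_sum, ← sum_sub_distrib]
    exact sum_congr rfl fun i _ => by ring
  have hpos := sum_linear_mul_pow_add_pos j ha
  rw [show j + 2 - 1 = j + 1 from rfl, sum_range_succ (fun i => a ^ i)]
  push_cast
  linear_combination hpos / 3 + hsplit / 3

theorem stmt_6 (k : ℕ) (hk : 2 ≤ k) (a : ℝ) (ha : 0 ≤ a) (ha1 : a < 1) :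
    (2 * ((k : ℝ) - 2) / 3) * (∑ i ∈ Finset.range k, a ^ i - k * a ^ (k - 1))
      < ∑ i ∈ Finset.range (k - 1), ((k : ℝ) - 1 - i) * a ^ i :=
  stmt_6_general k hk a ha
end

section
/- For every integer k ≥ 2 and every integer i ≥ 4, the quantity q_i = C(k+i−2, i) − C(k+1, i) + (−1)^i · C(k−1, i−2) is nonnegative. -/
theorem stmt_9 (k i : ℕ) (hk : 2 ≤ k) (hi : 4 ≤ i) :
    (0 : ℤ) ≤ (Nat.choose (k + i - 2) i : ℤ) - (Nat.choose (k + 1) i : ℤ)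
        + (-1) ^ i * (Nat.choose (k - 1) (i - 2) : ℤ) := by
  obtain ⟨m, rfl⟩ : ∃ m, k = m + 2 := ⟨k - 2, by omega⟩
  obtain ⟨j, rfl⟩ : ∃ j, i = j + 4 := ⟨i - 4, by omega⟩
  have e1 : m + 2 + (j + 4) - 2 = m + j + 4 := by omega
  have e2 : m + 2 - 1 = m + 1 := by omega
  have e3 : j + 4 - 2 = j + 2 := by omega
  rw [e1, e2, e3]
  have h1 : Nat.choose (m + 3) (j + 4) + Nat.choose (m + 1) (j + 2)
      ≤ Nat.choose (m + j + 4) (j + 4) := by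
    have hm : Nat.choose (m + 4) (j + 4) ≤ Nat.choose (m + j + 4) (j + 4) :=
      Nat.choose_le_choose _ (by omega)
    have hp : Nat.choose (m + 4) (j + 4)
        = Nat.choose (m + 3) (j + 3) + Nat.choose (m + 3) (j + 4) :=
      Nat.choose_succ_succ _ _
    have h2 : Nat.choose (m + 1) (j + 2) ≤ Nat.choose (m + 3) (j + 3) := by
      calc Nat.choose (m + 1) (j + 2) ≤ Nat.choose (m + 2) (j + 2) :=
            Nat.choose_le_choose _ (by omega)
        _ ≤ Nat.choose (m + 3) (j + 3) := by
            have : Nat.choose (m + 3) (j + 3)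
                = Nat.choose (m + 2) (j + 2) + Nat.choose (m + 2) (j + 3) :=
              Nat.choose_succ_succ' (m + 2) (j + 2)
            omega
    omega
  have h1' : (Nat.choose (m + 3) (j + 4) : ℤ) + (Nat.choose (m + 1) (j + 2) : ℤ)
      ≤ (Nat.choose (m + j + 4) (j + 4) : ℤ) := by exact_mod_cast h1
  have habs : -((Nat.choose (m + 1) (j + 2) : ℤ))
      ≤ (-1) ^ (j + 4) * (Nat.choose (m + 1) (j + 2) : ℤ) := by
    rcases Nat.even_or_odd (j + 4) with h | h
    · rw [h.neg_one_pow]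
      linarith [Int.natCast_nonneg (Nat.choose (m + 1) (j + 2))]
    · rw [h.neg_one_pow]
      linarith [Int.natCast_nonneg (Nat.choose (m + 1) (j + 2))]
  linarith
end

section
/- Let k ≥ 2 and let Q(ε) = (1+ε)^{k+1} − (1−ε)^{1−k} − 2ε − ε²(1−ε)^{k−1} for ε ∈ [0,1). Then there is exactly one ε_k ∈ (0,1) with Q(ε_k) = 0. -/
/-!
Write `k = m + 2`. Then `Q(x) = (m+1) x² (1+x) - T(x)` with
`T(x) = (1-x)^{-(m+1)} + x² (1-x)^{m+1} + 2x + (m+1)(x² + x³) - (1+x)^{m+3}`.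
Expanding `(1-x)^{-(m+1)} = ∑ C(n+m, m) xⁿ`, the coefficients of `T` vanish below degree 4 and are
nonnegative from degree 4 on, since `C(m+3, n) + C(m+1, n-2) ≤ C(m+4, n) ≤ C(n+m, m)` there.
Hence `T(x)/x⁴` is nondecreasing on `(0,1)` while `(m+1)(1+x)/x²` is strictly decreasing, so `Q`
has at most one zero there. The bound `T(x) ≤ 16 T(1/2) x⁴` on `[0, 1/2]` makes `Q` positive near
`0`, while `Q(7/8) < 0`, and the intermediate value theorem produces the zero.
-/

open Polynomial Set

theorem Polynomial.hasSum_coeff_mul_pow {R : Type*} [Semiring R] [TopologicalSpace R]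
    (p : R[X]) (x : R) : HasSum (fun n => p.coeff n * x ^ n) (p.eval x) := by
  rw [eval_eq_sum_range]
  exact hasSum_sum_of_ne_finset_zero fun n hn => by
    rw [coeff_eq_zero_of_natDegree_lt (by simpa using hn), zero_mul]

theorem Polynomial.coeff_one_sub_X_pow {R : Type*} [CommRing R] (n k : ℕ) :
    ((1 - X : R[X]) ^ n).coeff k = (-1) ^ k * n.choose k := by
  have : (1 - X : R[X]) ^ n = C ((-1) ^ n) * (X + C (-1)) ^ n := by
    rw [C_pow, ← mul_pow, map_neg, map_one]
    ring
  rw [this, coeff_C_mul, coeff_X_add_C_pow]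
  rcases le_or_gt k n with h | h
  · obtain ⟨j, rfl⟩ := Nat.exists_eq_add_of_le h
    rw [Nat.add_sub_cancel_left, pow_add, mul_assoc, ← mul_assoc ((-1) ^ j), ← pow_add,
      Even.neg_one_pow ⟨j, rfl⟩, one_mul]
  · simp [Nat.choose_eq_zero_of_lt h]

theorem mul_pow_le_mul_pow_of_hasSum {b : ℕ → ℝ} {d : ℕ} (hb : ∀ n, 0 ≤ b n)
    (hd : ∀ n < d, b n = 0) {x y sx sy : ℝ} (hx : 0 ≤ x) (hxy : x ≤ y)
    (hsx : HasSum (fun n => b n * x ^ n) sx) (hsy : HasSum (fun n => b n * y ^ n) sy) :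
    sx * y ^ d ≤ sy * x ^ d := by
  refine hasSum_le (fun n => ?_) (hsx.mul_right _) (hsy.mul_right _)
  rcases lt_or_ge n d with h | h
  · simp [hd n h]
  · obtain ⟨j, rfl⟩ := Nat.exists_eq_add_of_le h
    have := hb (d + j)
    have hy : 0 ≤ y := hx.trans hxy
    calc b (d + j) * x ^ (d + j) * y ^ d = b (d + j) * x ^ d * y ^ d * x ^ j := by ring
      _ ≤ b (d + j) * x ^ d * y ^ d * y ^ j := by gcongr
      _ = b (d + j) * y ^ (d + j) * x ^ d := by ring

theorem Nat.choose_add_choose_le {m n : ℕ} (hn : 4 ≤ n) :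
    (m + 3).choose n + (m + 1).choose (n - 2) ≤ (n + m).choose m := by
  obtain ⟨j, rfl⟩ : ∃ j, n = j + 2 := ⟨n - 2, by omega⟩
  have h1 : (m + 4).choose (j + 2) ≤ (j + 2 + m).choose (j + 2) :=
    Nat.choose_le_choose _ (by omega)
  have h2 : (m + 4).choose (j + 2) = (m + 3).choose (j + 1) + (m + 3).choose (j + 2) :=
    Nat.choose_succ_succ' _ _
  have h3 : (m + 3).choose (j + 1) = (m + 2).choose j + (m + 2).choose (j + 1) :=
    Nat.choose_succ_succ' _ _
  have h4 : (m + 1).choose j ≤ (m + 2).choose j := Nat.choose_le_choose j (by omega)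
  rw [Nat.choose_symm_add] at h1
  rw [Nat.add_sub_cancel]
  omega

noncomputable def Q (k : ℕ) (ε : ℝ) : ℝ :=
  (1 + ε) ^ (k + 1) - ((1 - ε) ^ (k - 1))⁻¹ - 2 * ε - ε ^ 2 * (1 - ε) ^ (k - 1)

noncomputable def tailPoly (m : ℕ) : ℝ[X] :=
  X ^ 2 * (1 - X) ^ (m + 1) + 2 * X + ((m : ℝ) + 1) • (X ^ 2 + X ^ 3) - (1 + X) ^ (m + 3)

noncomputable def tailCoeff (m n : ℕ) : ℝ := ((n + m).choose m : ℝ) + (tailPoly m).coeff n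

theorem tailCoeff_of_lt_four (m : ℕ) {n : ℕ} (hn : n < 4) : tailCoeff m n = 0 := by
  have h1 : (1 + m).choose m = m + 1 := by rw [add_comm, Nat.choose_succ_self_right]
  have h2 : (m + 3).choose 2 = (m + 2) + (2 + m).choose m := by
    rw [Nat.choose_succ_succ', Nat.choose_one_right, add_comm 2 m, Nat.choose_symm_add]
  have h3 : (3 + m).choose m = (m + 3).choose 3 := by rw [add_comm 3 m, Nat.choose_symm_add]
  interval_cases n <;>
    simp [tailCoeff, tailPoly, coeff_X, coeff_one_add_X_pow, coeff_X_pow_mul', coeff_one_sub_X_pow,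
      h1, h2, h3] <;>
    ring

theorem tailCoeff_nonneg (m n : ℕ) : 0 ≤ tailCoeff m n := by
  rcases lt_or_ge n 4 with hn | hn
  · exact (tailCoeff_of_lt_four m hn).ge
  have hchoose : ((m + 3).choose n : ℝ) + (m + 1).choose (n - 2) ≤ (n + m).choose m := by
    exact_mod_cast Nat.choose_add_choose_le hn
  have hsign : -((m + 1).choose (n - 2) : ℝ) ≤ (-1) ^ (n - 2) * (m + 1).choose (n - 2) := by
    rcases neg_one_pow_eq_or ℝ (n - 2) with h | h <;> simp [h]
  simp only [tailCoeff, tailPoly, smul_add, coeff_sub, coeff_add, coeff_X_pow_mul',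
    (by omega : 2 ≤ n), ↓reduceIte, coeff_one_sub_X_pow, coeff_ofNat_mul, coeff_X, mul_ite, mul_one,
    mul_zero, coeff_smul, coeff_X_pow, smul_eq_mul, coeff_one_add_X_pow]
  rw [if_neg (by omega), if_neg (by omega), if_neg (by omega)]
  linarith

noncomputable def tail (m : ℕ) (x : ℝ) : ℝ := ((1 - x) ^ (m + 1))⁻¹ + (tailPoly m).eval x

theorem hasSum_tailCoeff (m : ℕ) {x : ℝ} (hx : |x| < 1) :
    HasSum (fun n => tailCoeff m n * x ^ n) (tail m x) := by
  have hgeom := hasSum_choose_mul_geometric_of_norm_lt_one m (r := x) (by rwa [Real.norm_eq_abs])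
  simpa [tailCoeff, tail, add_mul] using hgeom.add ((tailPoly m).hasSum_coeff_mul_pow x)

theorem Q_eq_sub_tail (m : ℕ) (x : ℝ) : Q (m + 2) x = (m + 1) * x ^ 2 * (1 + x) - tail m x := by
  simp only [Q, Nat.add_one_sub_one, tail, tailPoly, smul_add, eval_sub, eval_add, eval_mul,
    eval_pow, eval_X, eval_one, eval_ofNat, eval_smul, smul_eq_mul]
  ring

theorem tail_nonneg (m : ℕ) {x : ℝ} (h0 : 0 ≤ x) (h1 : x < 1) : 0 ≤ tail m x :=
  (hasSum_tailCoeff m (abs_lt.2 ⟨by linarith, h1⟩)).nonneg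
    fun n => mul_nonneg (tailCoeff_nonneg m n) (pow_nonneg h0 n)

theorem tail_mul_pow_le (m : ℕ) {x y : ℝ} (hx : 0 ≤ x) (hxy : x ≤ y) (hy : y < 1) :
    tail m x * y ^ 4 ≤ tail m y * x ^ 4 :=
  mul_pow_le_mul_pow_of_hasSum (tailCoeff_nonneg m) (fun _ => tailCoeff_of_lt_four m) hx hxy
    (hasSum_tailCoeff m (abs_lt.2 ⟨by linarith, by linarith⟩))
    (hasSum_tailCoeff m (abs_lt.2 ⟨by linarith, hy⟩))

theorem eq_of_Q_eq_zero (m : ℕ) {x y : ℝ} (hx : x ∈ Ioo 0 1) (hy : y ∈ Ioo 0 1)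
    (hQx : Q (m + 2) x = 0) (hQy : Q (m + 2) y = 0) : x = y := by
  wlog hxy : x ≤ y generalizing x y
  · exact (this hy hx hQy hQx (le_of_not_ge hxy)).symm
  by_contra hne
  have hlt : x < y := lt_of_le_of_ne hxy hne
  have hmono := tail_mul_pow_le m hx.1.le hxy hy.2
  rw [Q_eq_sub_tail] at hQx hQy
  rw [show tail m x = (m + 1) * x ^ 2 * (1 + x) by linarith,
    show tail m y = (m + 1) * y ^ 2 * (1 + y) by linarith] at hmono
  have hpos : 0 < ((m : ℝ) + 1) * x ^ 2 * y ^ 2 := by have := hx.1; have := hy.1; positivity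
  have hkey : (1 + y) * x ^ 2 < (1 + x) * y ^ 2 := by
    nlinarith [mul_pos (add_pos hx.1 hy.1) (sub_pos.2 hlt),
      mul_pos (mul_pos hx.1 hy.1) (sub_pos.2 hlt)]
  nlinarith

theorem Q_seven_eighths_neg (m : ℕ) : Q (m + 2) (7 / 8) < 0 := by
  have hpow : ((15 : ℝ) / 8) ^ (m + 3) < 8 ^ (m + 1) :=
    calc ((15 : ℝ) / 8) ^ (m + 3) = (15 / 8) ^ m * (15 / 8) ^ 3 := pow_add _ _ _
      _ ≤ 8 ^ m * (15 / 8) ^ 3 := by gcongr; norm_num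
      _ < 8 ^ m * 8 := by gcongr; norm_num
      _ = 8 ^ (m + 1) := (pow_succ _ _).symm
  have hinv : ((1 - 7 / 8 : ℝ) ^ (m + 1))⁻¹ = 8 ^ (m + 1) := by
    rw [show (1 - 7 / 8 : ℝ) = 8⁻¹ by norm_num, inv_pow, inv_inv]
  rw [Q, show m + 2 + 1 = m + 3 from rfl, show m + 2 - 1 = m + 1 from rfl, hinv]
  norm_num
  linarith [pow_pos (by norm_num : (0 : ℝ) < 1 / 8) (m + 1)]

theorem exists_Q_pos (m : ℕ) : ∃ a, 0 < a ∧ a ≤ 1 / 2 ∧ 0 < Q (m + 2) a := by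
  set C := 16 * tail m (1 / 2)
  have hC : 0 ≤ C := by have := tail_nonneg m (x := 1 / 2) (by norm_num) (by norm_num); positivity
  set a := 1 / (2 * (C + 1))
  have ha0 : 0 < a := by positivity
  have ha : a ≤ 1 / 2 := one_div_le_one_div_of_le (by norm_num) (by linarith)
  have hCa : C * a < 1 := by
    rw [mul_one_div, div_lt_one (by positivity)]
    linarith
  refine ⟨a, ha0, ha, ?_⟩
  have htail : tail m a ≤ C * a ^ 4 := by
    have := tail_mul_pow_le m ha0.le ha (by norm_num)
    linarith
  have hsmall : C * a ^ 4 < a ^ 3 :=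
    calc C * a ^ 4 = (C * a) * a ^ 3 := by ring
      _ < 1 * a ^ 3 := by gcongr
      _ = a ^ 3 := one_mul _
  have hm : (0 : ℝ) ≤ m := m.cast_nonneg
  rw [Q_eq_sub_tail]
  nlinarith [mul_nonneg hm (sq_nonneg a), mul_nonneg hm (pow_pos ha0 3).le, pow_pos ha0 2]

theorem continuousOn_Q (k : ℕ) : ContinuousOn (Q k) (Iio 1) := by
  have hden : ∀ x ∈ Iio (1 : ℝ), (1 - x) ^ (k - 1) ≠ 0 := fun x hx =>
    pow_ne_zero _ (sub_ne_zero.2 (ne_of_gt hx))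
  unfold Q
  fun_prop (disch := assumption)

theorem exists_Q_eq_zero (m : ℕ) : ∃ ε ∈ Ioo (0 : ℝ) 1, Q (m + 2) ε = 0 := by
  obtain ⟨a, ha0, ha, hQa⟩ := exists_Q_pos m
  have hcont : ContinuousOn (Q (m + 2)) (Icc a (7 / 8)) :=
    (continuousOn_Q _).mono fun x hx => hx.2.trans_lt (by norm_num)
  obtain ⟨c, hc, hQc⟩ := intermediate_value_Icc' (by linarith) hcont
    ⟨(Q_seven_eighths_neg m).le, hQa.le⟩
  exact ⟨c, ⟨ha0.trans_le hc.1, hc.2.trans_lt (by norm_num)⟩, hQc⟩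

theorem stmt_10 (k : ℕ) (hk : 2 ≤ k) :
    ∃! ε : ℝ, ε ∈ Set.Ioo (0 : ℝ) 1 ∧
      (1 + ε) ^ (k + 1) - ((1 - ε) ^ (k - 1))⁻¹ - 2 * ε - ε ^ 2 * (1 - ε) ^ (k - 1) = 0 := by
  obtain ⟨m, rfl⟩ := Nat.exists_eq_add_of_le' hk
  obtain ⟨ε, hε, hQε⟩ := exists_Q_eq_zero m
  exact ⟨ε, ⟨hε, hQε⟩, fun y hy => eq_of_Q_eq_zero m hy.1 hε hy.2 hQε⟩
end

section
/- Let k ≥ 2 and let (c_i)_{i≥2} be a sequence of nonnegative reals. Then there is at most one ε ∈ (0,1) such that the series ∑_{i=2}^∞ c_i ε^i converges and (k−1)(1+ε) = ∑_{i=2}^∞ c_i ε^i; i.e., there do not exist 0 < ε_* < ε_{**} < 1 satisfying (k−1)(1+ε_*) = ∑_{i=2}^∞ c_i ε_*^i and (k−1)(1+ε_{**}) = ∑_{i=2}^∞ c_i ε_{**}^i with both series converging. -/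
theorem stmt_11 (k : ℕ) (hk : 2 ≤ k) (c : ℕ → ℝ) (hc : ∀ i, 0 ≤ c i)
    (ε₁ ε₂ : ℝ) (h0 : 0 < ε₁) (h12 : ε₁ < ε₂) (h1 : ε₂ < 1)
    (hs1 : Summable (fun i => c (i + 2) * ε₁ ^ (i + 2)))
    (hs2 : Summable (fun i => c (i + 2) * ε₂ ^ (i + 2)))
    (he1 : ((k : ℝ) - 1) * (1 + ε₁) = ∑' i, c (i + 2) * ε₁ ^ (i + 2))
    (he2 : ((k : ℝ) - 1) * (1 + ε₂) = ∑' i, c (i + 2) * ε₂ ^ (i + 2)) :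
    False := by
  have h2 : (0:ℝ) < ε₂ := h0.trans h12
  have key : ∀ i : ℕ, c (i + 2) * ε₁ ^ (i + 2) * (ε₂ / ε₁) ≤ c (i + 2) * ε₂ ^ (i + 2) := by
    intro i
    have e1 : c (i + 2) * ε₁ ^ (i + 2) * (ε₂ / ε₁) = c (i + 2) * (ε₁ ^ (i + 1) * ε₂) := by
      field_simp
      ring
    have e2 : c (i + 2) * ε₂ ^ (i + 2) = c (i + 2) * (ε₂ ^ (i + 1) * ε₂) := by ring
    rw [e1, e2]
    have hp : ε₁ ^ (i + 1) ≤ ε₂ ^ (i + 1) := pow_le_pow_left₀ h0.le h12.le _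
    exact mul_le_mul_of_nonneg_left (mul_le_mul_of_nonneg_right hp h2.le) (hc (i + 2))
  have hsum : (∑' i, c (i + 2) * ε₁ ^ (i + 2)) * (ε₂ / ε₁) ≤ ∑' i, c (i + 2) * ε₂ ^ (i + 2) := by
    rw [← tsum_mul_right]
    exact Summable.tsum_le_tsum key (hs1.mul_right _) hs2
  rw [← he1, ← he2] at hsum
  have hk1 : (1:ℝ) ≤ (k : ℝ) - 1 := by
    have : (2:ℝ) ≤ (k:ℝ) := by exact_mod_cast hk
    linarith
  have hdiv : ε₁ * ((↑k - 1) * (1 + ε₁) * (ε₂ / ε₁)) = (↑k - 1) * (1 + ε₁) * ε₂ := by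
    field_simp
  nlinarith [mul_le_mul_of_nonneg_left hsum h0.le]
end

section
/- For k = 2, the unique γ ∈ (0,1) with γ^{3/2} = η + (1−η)η² (where η = 1 − √(1−γ)) is γ = 1/2. -/
theorem stmt_12 (γ : ℝ) (hγ : γ ∈ Set.Ioo (0 : ℝ) 1) (η : ℝ)
    (hη : η = 1 - Real.sqrt (1 - γ)) :
    γ ^ ((3 : ℝ) / 2) = η + (1 - η) * η ^ 2 ↔ γ = 1 / 2 := by
  obtain ⟨h0, h1⟩ := hγ
  set s := Real.sqrt γ with hs
  set ε := Real.sqrt (1 - γ) with he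
  have hs2 : s ^ 2 = γ := Real.sq_sqrt h0.le
  have he2 : ε ^ 2 = 1 - γ := Real.sq_sqrt (by linarith)
  have hspos : 0 < s := Real.sqrt_pos.mpr h0
  have hepos : 0 < ε := Real.sqrt_pos.mpr (by linarith)
  have he1 : ε < 1 := by
    nlinarith [he2]
  have hrw : γ ^ ((3 : ℝ) / 2) = s ^ 3 := by
    have : γ ^ ((3 : ℝ) / 2) = (γ ^ ((1 : ℝ) / 2)) ^ (3 : ℕ) := by
      rw [← Real.rpow_natCast (γ ^ ((1 : ℝ) / 2)) 3, ← Real.rpow_mul h0.le]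
      norm_num
    rw [this, hs, Real.sqrt_eq_rpow]
  constructor
  · intro h
    rw [hrw, hη] at h
    -- h : s^3 = (1-ε) + (1-(1-ε))*(1-ε)^2
    have key : s * (1 - ε) * (1 + ε) = (1 - ε) * (1 + ε - ε ^ 2) := by
      nlinarith [h, hs2, he2]
    have h1e : (1 : ℝ) - ε ≠ 0 := by linarith
    have key2 : s * (1 + ε) = 1 + ε - ε ^ 2 := by
      apply mul_left_cancel₀ h1e
      linarith [key]
    have hsq : s ^ 2 * (1 + ε) ^ 2 = (1 + ε - ε ^ 2) ^ 2 := by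
      nlinarith [key2]
    -- s^2 = 1 - ε^2, so ε^2 (1 - 2 ε^2) = 0
    have : ε ^ 2 = 1 / 2 := by nlinarith [hsq, hs2, he2, sq_nonneg ε, hepos]
    linarith [he2, this]
  · intro h
    subst h
    have hse : s = ε := by rw [hs, he]; norm_num
    rw [hrw, hη, hse]
    nlinarith [he2, hse]
end

section
/- For k = 3, the crossover density is γ_3 = 3/4: with η = 1 − √(1−γ), one has γ² = η + (1−η)η³ when γ = 3/4, γ² < η + (1−η)η³ for γ ∈ (0, 3/4), and γ² > η + (1−η)η³ for γ ∈ (3/4, 1). -/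
theorem stmt_13 (γ : ℝ) (hγ : γ ∈ Set.Ioo (0 : ℝ) 1) (η : ℝ)
    (hη : η = 1 - Real.sqrt (1 - γ)) :
    (γ = 3 / 4 → γ ^ 2 = η + (1 - η) * η ^ 3) ∧
    (γ < 3 / 4 → γ ^ 2 < η + (1 - η) * η ^ 3) ∧
    (3 / 4 < γ → γ ^ 2 > η + (1 - η) * η ^ 3) := by
  obtain ⟨h0, h1⟩ := hγ
  set s := Real.sqrt (1 - γ) with hs
  have hs2 : s ^ 2 = 1 - γ := Real.sq_sqrt (by linarith)
  have hspos : 0 < s := Real.sqrt_pos.mpr (by linarith)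
  have hslt : s < 1 := by nlinarith
  subst hη
  have hγs : γ = 1 - s ^ 2 := by linarith
  refine ⟨fun h => ?_, fun h => ?_, fun h => ?_⟩
  · have h2 : s = 1 / 2 := by nlinarith
    rw [hγs, h2]; ring
  · have h2 : 1 / 2 < s := by nlinarith
    rw [hγs]
    nlinarith [mul_pos (mul_pos (sub_pos.mpr hslt) (pow_pos hspos 2)) (by linarith : (0:ℝ) < 2 * s - 1)]
  · have h2 : s < 1 / 2 := by nlinarith
    rw [hγs]
    nlinarith [mul_pos (mul_pos (sub_pos.mpr hslt) (pow_pos hspos 2)) (by linarith : (0:ℝ) < 1 - 2 * s)]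
end

section
/- Let k ≥ 2 be an integer and let x, y, z ∈ [0,1] with x + y + z = 1. Set γ = y² + 2yz and η = 1 − √(1−γ). Then y·(y+z)^k + z·y^k ≤ max(γ^{(k+1)/2}, η + (1−η)·η^k). -/
/-!
Write `y = s c`, `z = s (1 - c)` with `s = y + z ≤ 1`. Then the moment is `s ^ (k + 1) φ(c)` with
`φ(c) = c + (1 - c) c ^ k`, and `γ = s ^ 2 c (2 - c)`; also `η (2 - η) = γ`, so the anticlique
value is `φ(η)`. Hence `f ^ 2 = γ ^ (k + 1) R(c)` with `R(t) = φ(t) ^ 2 / (t (2 - t)) ^ (k + 1)`.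
On `(0, 1]` the derivative of `R` has the sign of `k t - (k - 1)`, so `R` decreases up to
`(k - 1) / k` and then increases to `R(1) = 1`. If `c ≥ (k - 1) / k`, then `R(c) ≤ 1` and
`f ≤ γ ^ ((k + 1) / 2)`. Otherwise `η ≤ c`, because `t (2 - t)` increases on `[0, 1]` and `s ≤ 1`,
so `R(c) ≤ R(η) = φ(η) ^ 2 / γ ^ (k + 1)`, i.e. `f ≤ φ(η)`.

Below, `φ` is `lShapeMoment`, `R` is `momentRatio`, and the exponent `k` is written `m + 1`.
-/

open Set

def lShapeMoment (m : ℕ) (t : ℝ) : ℝ := t + (1 - t) * t ^ (m + 1)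

noncomputable def momentRatio (m : ℕ) (t : ℝ) : ℝ := lShapeMoment m t ^ 2 / (t * (2 - t)) ^ (m + 2)

lemma lShapeMoment_nonneg (m : ℕ) {t : ℝ} (h0 : 0 ≤ t) (h1 : t ≤ 1) : 0 ≤ lShapeMoment m t := by
  unfold lShapeMoment
  have := mul_nonneg (sub_nonneg.2 h1) (pow_nonneg h0 (m + 1))
  linarith

lemma sq_lShapeMoment_eq_mul_momentRatio (m : ℕ) {t : ℝ} (ht : t * (2 - t) ≠ 0) :
    lShapeMoment m t ^ 2 = (t * (2 - t)) ^ (m + 2) * momentRatio m t := by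
  rw [momentRatio, mul_div_cancel₀ _ (pow_ne_zero _ ht)]

lemma momentRatio_one (m : ℕ) : momentRatio m 1 = 1 := by
  norm_num [momentRatio, lShapeMoment]

lemma hasDerivAt_momentRatio (m : ℕ) {t : ℝ} (ht : t * (2 - t) ≠ 0) :
    HasDerivAt (momentRatio m)
      (2 * lShapeMoment m t * t * (1 - t ^ m) / (t * (2 - t)) ^ (m + 3) * ((m + 1) * t - m)) t := by
  have hφ : HasDerivAt (lShapeMoment m) (1 + (m + 1) * t ^ m - (m + 2) * t ^ (m + 1)) t := by
    refine ((hasDerivAt_id' t).add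
      (((hasDerivAt_id' t).const_sub 1).mul (hasDerivAt_pow (m + 1) t))).congr_deriv ?_
    push_cast
    ring
  have hμ : HasDerivAt (fun s : ℝ => s * (2 - s)) (2 - 2 * t) t :=
    ((hasDerivAt_id' t).mul ((hasDerivAt_id' t).const_sub 2)).congr_deriv (by ring)
  refine ((hφ.pow 2).div (hμ.pow (m + 2)) (pow_ne_zero _ ht)).congr_deriv ?_
  simp only [Pi.pow_apply, lShapeMoment]
  field_simp
  push_cast
  ring

lemma momentRatio_deriv_weight_nonneg (m : ℕ) {t : ℝ} (h0 : 0 < t) (h1 : t ≤ 1) :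
    0 ≤ 2 * lShapeMoment m t * t * (1 - t ^ m) / (t * (2 - t)) ^ (m + 3) := by
  have hφ := lShapeMoment_nonneg m h0.le h1
  have hpow : t ^ m ≤ 1 := pow_le_one₀ h0.le h1
  have hμ : 0 < t * (2 - t) := mul_pos h0 (by linarith)
  have : 0 ≤ 1 - t ^ m := by linarith
  positivity

lemma continuousOn_momentRatio (m : ℕ) : ContinuousOn (momentRatio m) (Ioo 0 2) := fun _ ht =>
  (hasDerivAt_momentRatio m (mul_pos ht.1 (sub_pos.2 ht.2)).ne').continuousAt.continuousWithinAt

lemma momentRatio_antitoneOn (m : ℕ) : AntitoneOn (momentRatio m) (Ioc 0 (m / (m + 1))) := by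
  have hsub : Ioc (0 : ℝ) (m / (m + 1)) ⊆ Ioc 0 1 :=
    Ioc_subset_Ioc_right (div_le_one_of_le₀ (by linarith) (by positivity))
  refine antitoneOn_of_hasDerivWithinAt_nonpos (convex_Ioc _ _)
    ((continuousOn_momentRatio m).mono fun t ht => ⟨ht.1, by linarith [(hsub ht).2]⟩)
    (fun t ht => (hasDerivAt_momentRatio m ?_).hasDerivWithinAt) fun t ht => ?_
  · rw [interior_Ioc] at ht
    exact (mul_pos ht.1 (by linarith [(hsub (Ioo_subset_Ioc_self ht)).2])).ne'
  · rw [interior_Ioc] at ht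
    have ht1 := (hsub (Ioo_subset_Ioc_self ht)).2
    refine mul_nonpos_of_nonneg_of_nonpos (momentRatio_deriv_weight_nonneg m ht.1 ht1) ?_
    have := (lt_div_iff₀ (by positivity : (0 : ℝ) < m + 1)).1 ht.2
    linarith

lemma momentRatio_monotoneOn {m : ℕ} (hm : 0 < m) :
    MonotoneOn (momentRatio m) (Icc (m / (m + 1)) 1) := by
  have hpos : (0 : ℝ) < m / (m + 1) := by positivity
  refine monotoneOn_of_hasDerivWithinAt_nonneg (convex_Icc _ _)
    ((continuousOn_momentRatio m).mono fun t ht => ⟨hpos.trans_le ht.1, by linarith [ht.2]⟩)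
    (fun t ht => (hasDerivAt_momentRatio m ?_).hasDerivWithinAt) fun t ht => ?_
  · rw [interior_Icc] at ht
    exact (mul_pos (hpos.trans ht.1) (by linarith [ht.2])).ne'
  · rw [interior_Icc] at ht
    refine mul_nonneg (momentRatio_deriv_weight_nonneg m (hpos.trans ht.1) ht.2.le) ?_
    have := (div_lt_iff₀ (by positivity : (0 : ℝ) < m + 1)).1 ht.1
    linarith

lemma momentRatio_le_one {m : ℕ} (hm : 0 < m) {t : ℝ} (h0 : m / (m + 1) ≤ t) (h1 : t ≤ 1) :
    momentRatio m t ≤ 1 := by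
  have hthr : (m : ℝ) / (m + 1) ≤ 1 := div_le_one_of_le₀ (by linarith) (by positivity)
  simpa [momentRatio_one] using
    momentRatio_monotoneOn hm ⟨h0, h1⟩ ⟨hthr, le_rfl⟩ h1

lemma le_rpow_add_one_div_two_of_sq_le {a γ : ℝ} (hγ : 0 ≤ γ) {k : ℕ}
    (h : a ^ 2 ≤ γ ^ (k + 1)) : a ≤ γ ^ (((k : ℝ) + 1) / 2) := by
  rw [show ((k : ℝ) + 1) / 2 = ((k + 1 : ℕ) : ℝ) * (1 / 2) by push_cast; ring,
    Real.rpow_mul hγ, Real.rpow_natCast, ← Real.sqrt_eq_rpow]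
  exact Real.le_sqrt_of_sq_le h

lemma one_sub_sqrt_one_sub_mul_two_sub {γ : ℝ} (hγ : γ ≤ 1) :
    (1 - √(1 - γ)) * (2 - (1 - √(1 - γ))) = γ := by
  have := Real.sq_sqrt (sub_nonneg.2 hγ)
  linear_combination -this

lemma sq_mul_lShapeMoment_eq (m : ℕ) (s : ℝ) {c : ℝ} (hc : c * (2 - c) ≠ 0) :
    (s ^ (m + 2) * lShapeMoment m c) ^ 2 = (s ^ 2 * (c * (2 - c))) ^ (m + 2) * momentRatio m c := by
  rw [mul_pow, sq_lShapeMoment_eq_mul_momentRatio m hc]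
  generalize c * (2 - c) = μ
  ring

lemma mul_momentRatio_le_sq_lShapeMoment {m : ℕ} {c η γ : ℝ} (hη0 : 0 < η) (hηc : η ≤ c)
    (hc : c < m / (m + 1)) (hηγ : η * (2 - η) = γ) :
    γ ^ (m + 2) * momentRatio m c ≤ lShapeMoment m η ^ 2 := by
  have hη1 : η < 1 := hηc.trans_lt (hc.trans_le (div_le_one_of_le₀ (by linarith) (by positivity)))
  have hγ0 : 0 < γ := hηγ ▸ mul_pos hη0 (by linarith)
  calc _ ≤ γ ^ (m + 2) * momentRatio m η := by
        gcongr
        exact momentRatio_antitoneOn m ⟨hη0, hηc.trans hc.le⟩ ⟨hη0.trans_le hηc, hc.le⟩ hηc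
    _ = lShapeMoment m η ^ 2 := by
        rw [← hηγ, sq_lShapeMoment_eq_mul_momentRatio m (hηγ ▸ hγ0.ne')]

lemma mul_lShapeMoment_le_max {m : ℕ} (hm : 0 < m) {s c : ℝ} (hs0 : 0 < s) (hs1 : s ≤ 1)
    (hc0 : 0 < c) (hc1 : c ≤ 1) :
    s ^ (m + 2) * lShapeMoment m c ≤
      max ((s ^ 2 * (c * (2 - c))) ^ ((((m + 1 : ℕ) : ℝ) + 1) / 2))
        (lShapeMoment m (1 - √(1 - s ^ 2 * (c * (2 - c))))) := by
  set γ := s ^ 2 * (c * (2 - c))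
  set η := 1 - √(1 - γ)
  have hμc : 0 < c * (2 - c) := mul_pos hc0 (by linarith)
  have hγ0 : 0 < γ := by positivity
  have hγμ : γ ≤ c * (2 - c) := mul_le_of_le_one_left hμc.le (pow_le_one₀ hs0.le hs1)
  have hf0 : 0 ≤ s ^ (m + 2) * lShapeMoment m c := by
    have := lShapeMoment_nonneg m hc0.le hc1
    positivity
  have hfsq := sq_mul_lShapeMoment_eq m s hμc.ne'
  rcases le_or_gt (m / (m + 1) : ℝ) c with hcA | hcB
  · refine le_max_of_le_left (le_rpow_add_one_div_two_of_sq_le hγ0.le ?_)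
    rw [hfsq]
    exact mul_le_of_le_one_right (by positivity) (momentRatio_le_one hm hcA hc1)
  · have hηγ : η * (2 - η) = γ := one_sub_sqrt_one_sub_mul_two_sub (by nlinarith)
    have hη1 : η ≤ 1 := by linarith [Real.sqrt_nonneg (1 - γ)]
    have hη0 : 0 < η := by nlinarith
    have hηc : η ≤ c := by nlinarith
    refine le_max_of_le_right ((pow_le_pow_iff_left₀ hf0
      (lShapeMoment_nonneg m hη0.le hη1) two_ne_zero).1 ?_)
    rw [hfsq]
    exact mul_momentRatio_le_sq_lShapeMoment hη0 hηc hcB hηγ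

theorem stmt_19 (k : ℕ) (hk : 2 ≤ k) (x y z : ℝ)
    (hx : x ∈ Set.Icc (0 : ℝ) 1) (hy : y ∈ Set.Icc (0 : ℝ) 1) (hz : z ∈ Set.Icc (0 : ℝ) 1)
    (hsum : x + y + z = 1) (γ η : ℝ) (hγ : γ = y ^ 2 + 2 * y * z)
    (hη : η = 1 - Real.sqrt (1 - γ)) :
    y * (y + z) ^ k + z * y ^ k
      ≤ max (γ ^ (((k : ℝ) + 1) / 2)) (η + (1 - η) * η ^ k) := by
  obtain ⟨m, rfl⟩ : ∃ m, k = m + 1 := ⟨k - 1, by omega⟩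
  rcases hy.1.eq_or_lt with rfl | hy0
  · calc _ = (0 : ℝ) := by simp
      _ ≤ _ := le_max_of_le_left (Real.rpow_nonneg (by simp [hγ]) _)
  have hs : 0 < y + z := by linarith [hz.1]
  obtain ⟨s, c, hs0, hc0, hc1, rfl, rfl⟩ :
      ∃ s c : ℝ, 0 < s ∧ 0 < c ∧ c ≤ 1 ∧ y = s * c ∧ z = s * (1 - c) :=
    ⟨y + z, y / (y + z), hs, by positivity, div_le_one_of_le₀ (by linarith [hz.1]) hs.le,
      by field_simp, by field_simp; ring⟩
  have hγc : γ = s ^ 2 * (c * (2 - c)) := by rw [hγ]; ring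
  have hf : s * c * (s * c + s * (1 - c)) ^ (m + 1) + s * (1 - c) * (s * c) ^ (m + 1)
      = s ^ (m + 2) * lShapeMoment m c := by
    rw [lShapeMoment]
    ring
  rw [hf, hη, hγc]
  exact mul_lShapeMoment_le_max (by omega) hs0 (by nlinarith [hx.1]) hc0 hc1
end
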